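/- Let D be a ℂ-linear triangulated category such that for all objects E,F the space ⊕_i Hom(E,F[i]) is finite-dimensional over ℂ, and which satisfies Serre duality in dimension 2: dim_ℂ Hom(E,F[i]) = dim_ℂ Hom(F,E[2−i]) for all E,F and all i ∈ ℤ. Suppose A ⊆ D is the heart of a bounded t-structure on D and 0 → A → B → C → 0 is a short exact sequence in A with Hom(A,C) = 0. Then dim_ℂ Hom(A,A[1]) + dim_ℂ Hom(C,C[1]) ≤ dim_ℂ Hom(B,B[1]). -/

import Mathlib

/-!
Serre duality turns `Hom(A, X) = 0` into `Hom(X, A[2]) = 0`. With these two vanishings the long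
exact Hom-sequences of the triangle `A → B → X → A[1]` show: composing with `f[1]` embeds
`Ext¹(A, A)` into the image of the restriction `f^* : Ext¹(B, B) → Hom(A, B[1])`; the kernel of
`f^*` contains the image of `g^* : Hom(X, B[1]) → Ext¹(B, B)`; and composing with `g[1]` maps
`Hom(X, B[1])` onto `Ext¹(X, X)` and kills `ker g^*`, so `dim im g^* ≥ dim Ext¹(X, X)`.
Rank–nullity for `f^*` adds up the two bounds.
-/

open CategoryTheory CategoryTheory.Limits CategoryTheory.Pretriangulated
open CategoryTheory.Triangulated

universe v u

variable (C : Type u) [Category.{v} C] [HasZeroObject C] [HasShift C ℤ]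
  [Preadditive C] [∀ n : ℤ, (CategoryTheory.shiftFunctor C n).Additive] [Pretriangulated C]
  [CategoryTheory.Linear ℂ C]

/-- A t-structure is bounded if every object lies in `D^{≤n} ∩ D^{≥m}` for some `m ≤ n`. -/
def TStructureIsBounded (t : TStructure C) : Prop :=
  ∀ X : C, ∃ m n : ℤ, t.le n X ∧ t.ge m X

/-- The heart `D^{≤0} ∩ D^{≥0}` of a t-structure, as a predicate on objects. -/
def heartP (t : TStructure C) : C → Prop := fun X => t.le 0 X ∧ t.ge 0 X

/-- `dim_ℂ Hom(E, F[i])`. -/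
noncomputable def homDim (E F : C) (i : ℤ) : ℕ := Module.finrank ℂ (E ⟶ F⟦i⟧)

open Module

namespace LinearMap

variable {K U V W Y Z : Type*} [Field K]
  [AddCommGroup U] [Module K U] [AddCommGroup V] [Module K V] [AddCommGroup W] [Module K W]
  [AddCommGroup Y] [Module K Y] [AddCommGroup Z] [Module K Z]

theorem finrank_le_finrank_range_of_ker_le [FiniteDimensional K Y] {G : Y →ₗ[K] W}
    {S : Y →ₗ[K] Z} (hS : Function.Surjective S) (hGS : ker G ≤ ker S) :
    finrank K Z ≤ finrank K (range G) := by
  have hG := G.finrank_range_add_finrank_ker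
  have hS' := S.finrank_range_add_finrank_ker
  rw [range_eq_top.mpr hS, finrank_top] at hS'
  have := Submodule.finrank_mono hGS
  omega

theorem finrank_add_finrank_le_of_range_le [FiniteDimensional K W] [FiniteDimensional K Y]
    {Φ : U →ₗ[K] V} {Θ : W →ₗ[K] V} {G : Y →ₗ[K] W} {S : Y →ₗ[K] Z}
    (hΦ : Function.Injective Φ) (hΦΘ : range Φ ≤ range Θ) (hΘG : Θ ∘ₗ G = 0)
    (hGS : ker G ≤ ker S) (hS : Function.Surjective S) :
    finrank K U + finrank K Z ≤ finrank K W :=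
  calc finrank K U + finrank K Z
      = finrank K (range Φ) + finrank K Z := by rw [finrank_range_of_inj hΦ]
    _ ≤ finrank K (range Θ) + finrank K (range G) :=
        add_le_add (Submodule.finrank_mono hΦΘ) (finrank_le_finrank_range_of_ker_le hS hGS)
    _ ≤ finrank K (range Θ) + finrank K (ker Θ) :=
        Nat.add_le_add_left (Submodule.finrank_mono (range_le_ker_iff.mpr hΘG)) _
    _ = finrank K W := Θ.finrank_range_add_finrank_ker

end LinearMap

namespace CategoryTheory.Pretriangulated

variable {D : Type*} [Category D] [HasZeroObject D] [HasShift D ℤ] [Preadditive D]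
  [∀ n : ℤ, (shiftFunctor D n).Additive] [Pretriangulated D]
  {A B X : D} {f : A ⟶ B} {g : B ⟶ X} {h : X ⟶ A⟦(1 : ℤ)⟧}

theorem eq_zero_of_comp_shift_map_mor₁_eq_zero (hT : Triangle.mk f g h ∈ distTriang D) {Y : D}
    (hY : Subsingleton (Y ⟶ X)) {ε : Y ⟶ A⟦(1 : ℤ)⟧} (hε : ε ≫ f⟦(1 : ℤ)⟧' = 0) : ε = 0 := by
  obtain ⟨u, rfl⟩ := Triangle.coyoneda_exact₁ _ hT ε hε
  obtain rfl : u = 0 := hY.elim _ _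
  exact zero_comp

theorem exists_mor₁_comp_eq (hT : Triangle.mk f g h ∈ distTriang D) {Z : D}
    (hZ : Subsingleton (X ⟶ Z⟦(1 : ℤ)⟧)) (φ : A ⟶ Z) : ∃ e : B ⟶ Z, f ≫ e = φ := by
  have hZ' : Subsingleton (X⟦(-1 : ℤ)⟧ ⟶ Z) :=
    @Equiv.subsingleton _ _ ((shiftEquiv' D (-1) 1 (by norm_num)).toAdjunction.homEquiv X Z) hZ
  obtain ⟨e, he⟩ := Triangle.yoneda_exact₂ _ (inv_rot_of_distTriang _ hT) φ (hZ'.elim _ _)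
  exact ⟨e, he.symm⟩

-- The thrice rotated triangle is `A⟦1⟧ → B⟦1⟧ → X⟦1⟧ → A⟦1⟧⟦1⟧` with all three maps negated.
theorem exists_comp_shift_map_mor₂_eq (hT : Triangle.mk f g h ∈ distTriang D) {Y : D}
    (hY : Subsingleton (Y ⟶ A⟦(1 : ℤ)⟧⟦(1 : ℤ)⟧)) (ξ : Y ⟶ X⟦(1 : ℤ)⟧) :
    ∃ ψ : Y ⟶ B⟦(1 : ℤ)⟧, ψ ≫ g⟦(1 : ℤ)⟧' = ξ := by
  obtain ⟨ψ, rfl⟩ := Triangle.coyoneda_exact₃ _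
    (rot_of_distTriang _ (rot_of_distTriang _ (rot_of_distTriang _ hT))) ξ (hY.elim _ _)
  exact ⟨-ψ, (Preadditive.neg_comp _ _).trans (Preadditive.comp_neg _ _).symm⟩

theorem eq_zero_of_mor₂_comp_eq_zero (hT : Triangle.mk f g h ∈ distTriang D) {V : D}
    (hV : Subsingleton (A⟦(1 : ℤ)⟧ ⟶ V)) {ψ : X ⟶ V} (hψ : g ≫ ψ = 0) : ψ = 0 := by
  obtain ⟨u, rfl⟩ := Triangle.yoneda_exact₃ _ hT ψ hψ
  obtain rfl : u = 0 := hV.elim _ _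
  exact comp_zero

end CategoryTheory.Pretriangulated

theorem mukai_inequality
    -- `C` is Hom-finite:
    (hfin : ∀ E F : C, (∀ i : ℤ, FiniteDimensional ℂ (E ⟶ F⟦i⟧)) ∧
      Set.Finite {i : ℤ | ∃ f : E ⟶ F⟦i⟧, f ≠ 0})
    -- Serre duality in dimension 2:
    (hserre : ∀ (E F : C) (i : ℤ), homDim C E F i = homDim C F E (2 - i))
    -- a short exact sequence `0 → A → B → X → 0` in the heart, i.e. a distinguished
    -- triangle with all three vertices in the heart:
    (A B X : C) (f : A ⟶ B) (g : B ⟶ X) (h : X ⟶ A⟦(1 : ℤ)⟧)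
    (htri : Triangle.mk f g h ∈ distTriang C)
    -- with `Hom(A, X) = 0`:
    (hhom : ∀ u : A ⟶ X, u = 0) :
    homDim C A A 1 + homDim C X X 1 ≤ homDim C B B 1 := by
  have hAX : Subsingleton (A ⟶ X) := subsingleton_of_forall_eq 0 hhom
  have hAX0 : Subsingleton (A ⟶ X⟦(0 : ℤ)⟧) :=
    @Equiv.subsingleton _ _ (Iso.homCongr (Iso.refl A) ((shiftFunctorZero C ℤ).app X)) hAX
  have hXA2 : Subsingleton (X ⟶ A⟦(2 : ℤ)⟧) := by
    have := (hfin X A).1 2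
    refine (finrank_zero_iff (R := ℂ)).mp ?_
    rw [← homDim, hserre, sub_self, homDim, finrank_zero_of_subsingleton]
  have hXA11 : Subsingleton (X ⟶ A⟦(1 : ℤ)⟧⟦(1 : ℤ)⟧) :=
    (Iso.homCongr (Iso.refl X) ((shiftFunctorAdd' C 1 1 2 rfl).app A)).symm.subsingleton
  have hAX1 : Subsingleton (A⟦(1 : ℤ)⟧ ⟶ X⟦(1 : ℤ)⟧) :=
    (Functor.FullyFaithful.ofFullyFaithful (shiftFunctor C (1 : ℤ))).homEquiv.symm.subsingleton
  have : FiniteDimensional ℂ (B ⟶ B⟦(1 : ℤ)⟧) := (hfin B B).1 1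
  have : FiniteDimensional ℂ (X ⟶ B⟦(1 : ℤ)⟧) := (hfin X B).1 1
  refine LinearMap.finrank_add_finrank_le_of_range_le
    (Φ := Linear.rightComp ℂ A (f⟦(1 : ℤ)⟧')) (Θ := Linear.leftComp ℂ _ f)
    (G := Linear.leftComp ℂ _ g) (S := Linear.rightComp ℂ X (g⟦(1 : ℤ)⟧'))
    ((injective_iff_map_eq_zero _).mpr fun _ => eq_zero_of_comp_shift_map_mor₁_eq_zero htri hAX)
    ?_ ?_ ?_ (exists_comp_shift_map_mor₂_eq htri hXA11)
  · rintro _ ⟨ε, rfl⟩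
    obtain ⟨e, rfl⟩ := exists_mor₁_comp_eq htri hXA11 ε
    exact ⟨e ≫ f⟦(1 : ℤ)⟧', (Category.assoc _ _ _).symm⟩
  · have hfg : f ≫ g = 0 := comp_distTriang_mor_zero₁₂ _ htri
    ext ψ
    change f ≫ g ≫ ψ = 0
    rw [← Category.assoc, hfg, zero_comp]
  · intro ψ hψ
    refine eq_zero_of_mor₂_comp_eq_zero htri hAX1 ?_
    have hgψ : g ≫ ψ = 0 := hψ
    change g ≫ ψ ≫ g⟦(1 : ℤ)⟧' = 0
    rw [← Category.assoc, hgψ, zero_comp]
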